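/- arXiv:1009.3899 — 9 statements merged into one kernel-verified Lean document; each statement's English description precedes it below -/
import Mathlib

section
/- Let F be a field and G a subfield of F. Suppose A ⊆ F is a set all of whose cross ratios lie in G, i.e., X(a,b,c,d) = (a-b)(c-d)/((a-d)(c-b)) ∈ G for all a,b,c,d ∈ A with a ≠ d and b ≠ c. Then either |A ∩ (xG + y)| ≤ 2 for all x,y ∈ F, or there exist x,y ∈ F such that A ⊆ xG + y. -/
/-!
If `A` meets the line `xG + y` in three points `a, b, c`, then `(a - b)/(c - b) ∈ G`, so for any
`d ∈ A` the cross ratio condition forces `g := (c - d)/(a - d) ∈ G`. Solving `c - d = g (a - d)`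
for `d` (with `g ≠ 1` as `a ≠ c`) exhibits `d` as a `G`-affine combination of `a` and `c`,
hence `d ∈ xG + y`.
-/

/-- The cross ratio of four field elements. -/
def crossRatio {F : Type*} [Field F] (a b c d : F) : F :=
  (a - b) * (c - d) / ((a - d) * (c - b))

lemma Set.exists_three_ne_of_two_lt_encard {α : Type*} {s : Set α} (h : 2 < s.encard) :
    ∃ a ∈ s, ∃ b ∈ s, ∃ c ∈ s, a ≠ b ∧ a ≠ c ∧ b ≠ c := by
  obtain ⟨a, b, ha, hb, hab⟩ := Set.one_lt_encard_iff.1 (lt_trans (by norm_num) h)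
  have hns : ¬ s ⊆ {a, b} := fun hsub =>
    (Set.encard_mono hsub).trans_eq (Set.encard_pair hab) |>.not_gt h
  obtain ⟨c, hc, hcab⟩ := Set.not_subset.1 hns
  simp only [Set.mem_insert_iff, Set.mem_singleton_iff, not_or] at hcab
  exact ⟨a, ha, b, hb, c, hc, hab, Ne.symm hcab.1, Ne.symm hcab.2⟩

lemma crossRatio_eq_mul {F : Type*} [Field F] (a b c d : F) :
    crossRatio a b c d = (a - b) / (c - b) * ((c - d) / (a - d)) := by
  rw [crossRatio, mul_comm (a - d), mul_div_mul_comm]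

section AffineLine

variable {F : Type*} [Field F] {G : Subfield F} {x y : F}

lemma Subfield.mul_div_mul_mem {u v : F} (hu : u ∈ G) (hv : v ∈ G) : x * u / (x * v) ∈ G := by
  rcases eq_or_ne x 0 with rfl | hx
  · simp
  · rw [mul_div_mul_left _ _ hx]
    exact G.div_mem hu hv

lemma sub_div_sub_mem_of_mem_affine {a b c : F} (ha : a ∈ (fun g => x * g + y) '' (G : Set F))
    (hb : b ∈ (fun g => x * g + y) '' (G : Set F))
    (hc : c ∈ (fun g => x * g + y) '' (G : Set F)) : (a - b) / (c - b) ∈ G := by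
  obtain ⟨α, hα, rfl⟩ := ha
  obtain ⟨β, hβ, rfl⟩ := hb
  obtain ⟨γ, hγ, rfl⟩ := hc
  simpa only [add_sub_add_right_eq_sub, ← mul_sub] using
    Subfield.mul_div_mul_mem (x := x) (G.sub_mem hα hβ) (G.sub_mem hγ hβ)

lemma mem_affine_of_sub_div_sub_mem {a c d : F} (ha : a ∈ (fun g => x * g + y) '' (G : Set F))
    (hc : c ∈ (fun g => x * g + y) '' (G : Set F)) (hac : a ≠ c) (hda : d ≠ a)
    (hG : (c - d) / (a - d) ∈ G) : d ∈ (fun g => x * g + y) '' (G : Set F) := by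
  obtain ⟨α, hα, rfl⟩ := ha
  obtain ⟨γ, hγ, rfl⟩ := hc
  set g := (x * γ + y - d) / (x * α + y - d)
  have hcd : x * γ + y - d = g * (x * α + y - d) :=
    (div_mul_cancel₀ _ (sub_ne_zero.2 hda.symm)).symm
  have hg : 1 - g ≠ 0 := by
    intro hg1
    apply hac
    linear_combination (x * α + y - d) * hg1 - hcd
  refine ⟨(γ - g * α) / (1 - g), G.div_mem (G.sub_mem hγ (G.mul_mem hG hα))
    (G.sub_mem G.one_mem hG), ?_⟩
  simp only
  field_simp
  linear_combination hcd

end AffineLine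

theorem stmt_1 {F : Type*} [Field F] (G : Subfield F) (A : Set F)
    (hX : ∀ a ∈ A, ∀ b ∈ A, ∀ c ∈ A, ∀ d ∈ A, a ≠ d → b ≠ c → crossRatio a b c d ∈ G) :
    (∀ x y : F, (A ∩ (fun g => x * g + y) '' (G : Set F)).encard ≤ 2) ∨
      ∃ x y : F, A ⊆ (fun g => x * g + y) '' (G : Set F) := by
  refine or_iff_not_imp_left.2 fun h => ?_
  simp only [not_forall, not_le] at h
  obtain ⟨x, y, hgt⟩ := h
  obtain ⟨a, ⟨haA, ha⟩, b, ⟨hbA, hb⟩, c, ⟨hcA, hc⟩, hab, hac, hbc⟩ :=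
    Set.exists_three_ne_of_two_lt_encard hgt
  refine ⟨x, y, fun d hd => ?_⟩
  rcases eq_or_ne d a with rfl | hda
  · exact ha
  have hr : (a - b) / (c - b) ≠ 0 :=
    div_ne_zero (sub_ne_zero.2 hab) (sub_ne_zero.2 hbc.symm)
  have hcd : (c - d) / (a - d) = crossRatio a b c d / ((a - b) / (c - b)) := by
    rw [crossRatio_eq_mul, mul_div_cancel_left₀ _ hr]
  refine mem_affine_of_sub_div_sub_mem ha hc hac hda ?_
  rw [hcd]
  exact G.div_mem (hX a haA b hbA c hcA d hd hda.symm hbc) (sub_div_sub_mem_of_mem_affine ha hb hc)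
end

section
/- Let F be a field, G a subfield of F, and A ⊆ F a set containing at least 3 elements of some coset xG + y (x,y ∈ F). If A is not contained in xG + y, then some cross ratio of four elements of A does not lie in G. Equivalently: if |A ∩ (xG+y)| ≥ 3 and all cross ratios of elements of A lie in G, then A ⊆ xG + y. -/
theorem crossRatio_mul_add {F : Type*} [Field F] {x : F} (hx : x ≠ 0) (y a b c d : F) :
    crossRatio (x * a + y) (x * b + y) (x * c + y) (x * d + y) = crossRatio a b c d := by
  have h (p q : F) : x * p + y - (x * q + y) = x * (p - q) := by ring
  simp only [crossRatio, h, mul_mul_mul_comm x]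
  exact mul_div_mul_left _ _ (mul_ne_zero hx hx)

theorem Subfield.mem_of_crossRatio_mem {F : Type*} [Field F] (K : Subfield F) {a b c d : F}
    (ha : a ∈ K) (hb : b ∈ K) (hc : c ∈ K) (hab : a ≠ b) (hac : a ≠ c) (hbc : b ≠ c)
    (hr : crossRatio a b c d ∈ K) : d ∈ K := by
  by_cases had : a = d
  · exact had ▸ ha
  set r := crossRatio a b c d
  have hcross : r * ((a - d) * (c - b)) = (a - b) * (c - d) :=
    div_mul_cancel₀ _ (mul_ne_zero (sub_ne_zero.2 had) (sub_ne_zero.2 hbc.symm))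
  -- The coefficient of `d` in `hcross` vanishes only if `(a - b) * (a - c) = 0`.
  have hden : (a - b) - r * (c - b) ≠ 0 := by
    intro h0
    have : (a - b) * (a - c) = 0 := by linear_combination hcross + (a - d) * h0
    simp [sub_eq_zero, hab, hac] at this
  have hd : d = ((a - b) * c - r * a * (c - b)) / ((a - b) - r * (c - b)) := by
    rw [eq_div_iff hden]
    linear_combination hcross
  rw [hd]
  exact div_mem (sub_mem (mul_mem (sub_mem ha hb) hc) (mul_mem (mul_mem hr ha) (sub_mem hc hb)))
    (sub_mem (sub_mem ha hb) (mul_mem hr (sub_mem hc hb)))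

theorem stmt_2 {F : Type*} [Field F] (G : Subfield F) (A : Set F) (x y : F)
    (hcard : 3 ≤ (A ∩ (fun g => x * g + y) '' (G : Set F)).encard)
    (hX : ∀ a ∈ A, ∀ b ∈ A, ∀ c ∈ A, ∀ d ∈ A, a ≠ d → b ≠ c → crossRatio a b c d ∈ G) :
    A ⊆ (fun g => x * g + y) '' (G : Set F) := by
  obtain ⟨T, hT, hT3⟩ := Set.exists_subset_encard_eq hcard
  obtain ⟨a, b, c, hab, hac, hbc, rfl⟩ := Set.encard_eq_three.1 hT3
  obtain ⟨haA, ga, hga, rfl⟩ := hT (a := a) (by simp)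
  obtain ⟨hbA, gb, hgb, rfl⟩ := hT (a := b) (by simp)
  obtain ⟨hcA, gc, hgc, rfl⟩ := hT (a := c) (by simp)
  have hx : x ≠ 0 := by rintro rfl; simp at hab
  intro d hd
  by_cases had : x * ga + y = d
  · exact had ▸ ⟨ga, hga, rfl⟩
  refine ⟨(d - y) / x, ?_, by simp only [mul_div_cancel₀ _ hx, sub_add_cancel]⟩
  have hr := hX _ haA _ hbA _ hcA d hd had hbc
  rw [← sub_add_cancel d y, ← mul_div_cancel₀ (d - y) hx, crossRatio_mul_add hx] at hr
  exact G.mem_of_crossRatio_mem hga hgb hgc (by rintro rfl; simp at hab)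
    (by rintro rfl; simp at hac) (by rintro rfl; simp at hbc) hr
end

section
/- Let F be a field, λ > 0, A ⊆ F a (1,λ)-strong-antifield, and B ⊆ F a finite set. Suppose there is an injection τ : B → A preserving cross ratios, i.e., X(τ(b₁),τ(b₂),τ(b₃),τ(b₄)) = X(b₁,b₂,b₃,b₄) whenever b₁,b₂,b₃,b₄ ∈ B with b₁ ≠ b₄ and b₂ ≠ b₃. Then B is a (1,λ)-antifield. -/
/-- A `(1,λ)`-antifield: the intersection with every affine copy of a finite subfield
has size at most `max λ √|G|`. -/
def IsAntifield {F : Type*} [Field F] (lam : ℝ) (A : Set F) : Prop :=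
  ∀ G : Subfield F, (G : Set F).Finite → ∀ a b : F,
    ((A ∩ (fun g => a * g + b) '' (G : Set F)).ncard : ℝ) ≤
      max lam (Real.sqrt ((G : Set F).ncard))

/-- A `(1,λ)`-strong-antifield: an antifield which, for every finite subfield `G` with
`|G| ≥ λ`, meets strictly fewer than `max{λ, √|G|}/2` distinct additive translates of `G`. -/
def IsStrongAntifield {F : Type*} [Field F] (lam : ℝ) (A : Set F) : Prop :=
  IsAntifield lam A ∧
    ∀ G : Subfield F, (G : Set F).Finite → lam ≤ ((G : Set F).ncard : ℝ) →
      ∃ n : ℕ, (n : ℝ) < max lam (Real.sqrt ((G : Set F).ncard)) / 2 ∧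
        {S : Set F | (∃ b : F, S = (fun g => g + b) '' (G : Set F)) ∧
          (A ∩ S).Nonempty}.encard ≤ n

/-!
Let `C = B ∩ (aG + b)` and `T = τ(C) ⊆ A`. Cross ratios of points of an affine copy of `G`
lie in `G`, so by hypothesis all cross ratios of points of `T` lie in `G`. If an additive
translate of `G` contains three points `t₁, t₂, t₃` of `T`, then for any `t ∈ T` the equation
`X(t₁, t₂, t₃, t) ∈ G` can be solved for `t - t₁` inside `G`, so all of `T` lies in `G + t₁`
and the antifield bound for `A` applies. Otherwise every translate of `G` holds at most two
points of `T`, and the strong-antifield bound on the number of translates met by `A` gives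
`|T| ≤ 2n < max{λ, √|G|}`.
-/

theorem ncard_le_mul_of_ncard_inter_translate_le {M : Type*} [AddZeroClass M] {G T : Set M}
    (h0 : (0 : M) ∈ G) (hT : T.Finite) {k n : ℕ}
    (hk : ∀ c, (T ∩ (fun g => g + c) '' G).ncard ≤ k)
    (hn : {S : Set M | (∃ c, S = (fun g => g + c) '' G) ∧ (T ∩ S).Nonempty}.encard ≤ n) :
    T.ncard ≤ k * n := by
  classical
  set ψ : M → Set M := fun t => (fun g => g + t) '' G
  have hmem : ∀ t, t ∈ ψ t := fun t => ⟨0, h0, zero_add t⟩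
  have hfiber : ∀ S ∈ hT.toFinset.image ψ, {t ∈ hT.toFinset | ψ t = S}.card ≤ k := by
    intro S hS
    obtain ⟨t, -, rfl⟩ := Finset.mem_image.1 hS
    rw [← Set.ncard_coe_finset]
    refine (Set.ncard_le_ncard (fun s hs => ?_) (hT.inter_of_left _)).trans (hk t)
    simp only [Finset.coe_filter, Set.Finite.mem_toFinset, Set.mem_ofPred_eq] at hs
    exact ⟨hs.1, show s ∈ ψ t from hs.2 ▸ hmem s⟩
  have himage : (hT.toFinset.image ψ).card ≤ n := by
    have hsub : (↑(hT.toFinset.image ψ) : Set (Set M)) ⊆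
        {S | (∃ c, S = (fun g => g + c) '' G) ∧ (T ∩ S).Nonempty} := by
      intro S hS
      obtain ⟨t, ht, rfl⟩ := Finset.mem_image.1 hS
      rw [Set.Finite.mem_toFinset] at ht
      exact ⟨⟨t, rfl⟩, t, ht, hmem t⟩
    have := (Set.encard_mono hsub).trans hn
    rwa [Set.encard_coe_eq_coe_finsetCard, Nat.cast_le] at this
  rw [Set.ncard_eq_toFinset_card T hT]
  exact (Finset.card_le_mul_card_image _ k hfiber).trans (Nat.mul_le_mul_left k himage)

section CrossRatio

variable {F : Type*} [Field F]

theorem crossRatio_affine {a : F} (ha : a ≠ 0) (b g₁ g₂ g₃ g₄ : F) :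
    crossRatio (a * g₁ + b) (a * g₂ + b) (a * g₃ + b) (a * g₄ + b) =
      crossRatio g₁ g₂ g₃ g₄ := by
  simp only [crossRatio, add_sub_add_right_eq_sub, ← mul_sub]
  rw [mul_mul_mul_comm a (g₁ - g₂), mul_mul_mul_comm a (g₁ - g₄),
    mul_div_mul_left _ _ (mul_ne_zero ha ha)]

theorem crossRatio_mem (G : Subfield F) {g₁ g₂ g₃ g₄ : F}
    (h₁ : g₁ ∈ G) (h₂ : g₂ ∈ G) (h₃ : g₃ ∈ G) (h₄ : g₄ ∈ G) : crossRatio g₁ g₂ g₃ g₄ ∈ G :=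
  G.div_mem (G.mul_mem (G.sub_mem h₁ h₂) (G.sub_mem h₃ h₄))
    (G.mul_mem (G.sub_mem h₁ h₄) (G.sub_mem h₃ h₂))

theorem crossRatio_mem_of_mem_affine_image (G : Subfield F) {a b p₁ p₂ p₃ p₄ : F}
    (h₁ : p₁ ∈ (fun g => a * g + b) '' (G : Set F))
    (h₂ : p₂ ∈ (fun g => a * g + b) '' (G : Set F))
    (h₃ : p₃ ∈ (fun g => a * g + b) '' (G : Set F))
    (h₄ : p₄ ∈ (fun g => a * g + b) '' (G : Set F)) :
    crossRatio p₁ p₂ p₃ p₄ ∈ G := by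
  obtain ⟨g₁, hg₁, rfl⟩ := h₁
  obtain ⟨g₂, hg₂, rfl⟩ := h₂
  obtain ⟨g₃, hg₃, rfl⟩ := h₃
  obtain ⟨g₄, hg₄, rfl⟩ := h₄
  rcases eq_or_ne a 0 with rfl | ha
  · simp [crossRatio]
  · rw [crossRatio_affine ha]
    exact crossRatio_mem G hg₁ hg₂ hg₃ hg₄

theorem sub_mem_of_crossRatio_mem (G : Subfield F) {t₁ t₂ t₃ t : F}
    (h₂ : t₂ - t₁ ∈ G) (h₃ : t₃ - t₁ ∈ G) (h₁₂ : t₁ ≠ t₂) (h₁₃ : t₁ ≠ t₃) (h₂₃ : t₂ ≠ t₃)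
    (h₁ : t₁ ≠ t) (hX : crossRatio t₁ t₂ t₃ t ∈ G) : t - t₁ ∈ G := by
  set g := crossRatio t₁ t₂ t₃ t
  have hg : g * ((t₁ - t) * (t₃ - t₂)) = (t₁ - t₂) * (t₃ - t) :=
    div_mul_cancel₀ _ (mul_ne_zero (sub_ne_zero.2 h₁) (sub_ne_zero.2 h₂₃.symm))
  have key : (t - t₁) * (g * (t₃ - t₂) + (t₂ - t₁)) = (t₂ - t₁) * (t₃ - t₁) := by
    linear_combination -hg
  have hden : g * (t₃ - t₂) + (t₂ - t₁) ≠ 0 := by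
    intro h
    rw [h, mul_zero] at key
    exact mul_ne_zero (sub_ne_zero.2 h₁₂.symm) (sub_ne_zero.2 h₁₃.symm) key.symm
  rw [eq_div_of_mul_eq hden key]
  have h₃₂ : t₃ - t₂ ∈ G := sub_sub_sub_cancel_right t₃ t₂ t₁ ▸ G.sub_mem h₃ h₂
  exact G.div_mem (G.mul_mem h₂ h₃) (G.add_mem (G.mul_mem hX h₃₂) h₂)

theorem subset_translate_of_three_mem_translate (G : Subfield F) {T : Set F}
    (hX : ∀ t₁ ∈ T, ∀ t₂ ∈ T, ∀ t₃ ∈ T, ∀ t ∈ T, t₁ ≠ t → t₂ ≠ t₃ →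
      crossRatio t₁ t₂ t₃ t ∈ G)
    {c t₁ t₂ t₃ : F} (h₁ : t₁ ∈ T ∩ (fun g => g + c) '' (G : Set F))
    (h₂ : t₂ ∈ T ∩ (fun g => g + c) '' (G : Set F))
    (h₃ : t₃ ∈ T ∩ (fun g => g + c) '' (G : Set F))
    (h₁₂ : t₁ ≠ t₂) (h₁₃ : t₁ ≠ t₃) (h₂₃ : t₂ ≠ t₃) :
    T ⊆ (fun g => g + t₁) '' (G : Set F) := by
  have hc : ∀ {s}, s ∈ (fun g => g + c) '' (G : Set F) → s - c ∈ G := by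
    rintro _ ⟨g, hg, rfl⟩
    simpa using hg
  have hd : ∀ {s}, s ∈ (fun g => g + c) '' (G : Set F) → s - t₁ ∈ G := by
    intro s hs
    simpa using G.sub_mem (hc hs) (hc h₁.2)
  intro t ht
  refine ⟨t - t₁, ?_, sub_add_cancel t t₁⟩
  rcases eq_or_ne t₁ t with rfl | ht₁
  · simp
  · exact sub_mem_of_crossRatio_mem G (hd h₂.2) (hd h₃.2) h₁₂ h₁₃ h₂₃ ht₁
      (hX _ h₁.1 _ h₂.1 _ h₃.1 _ ht ht₁ h₂₃)

end CrossRatio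

theorem stmt_3_general {F : Type*} [Field F] (lam : ℝ)
    (A B : Set F) (hA : IsStrongAntifield lam A)
    (τ : F → F) (hmaps : Set.MapsTo τ B A) (hinj : Set.InjOn τ B)
    (hcr : ∀ b₁ ∈ B, ∀ b₂ ∈ B, ∀ b₃ ∈ B, ∀ b₄ ∈ B, b₁ ≠ b₄ → b₂ ≠ b₃ →
      crossRatio (τ b₁) (τ b₂) (τ b₃) (τ b₄) = crossRatio b₁ b₂ b₃ b₄) :
    IsAntifield lam B := by
  intro G hG a b
  set C := B ∩ (fun g => a * g + b) '' (G : Set F)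
  have hCB : C ⊆ B := Set.inter_subset_left
  have hC : C.Finite := (hG.image _).subset Set.inter_subset_right
  have hT : (τ '' C).Finite := hC.image τ
  have hTA : τ '' C ⊆ A := (hmaps.mono_left hCB).image_subset
  rw [← (hinj.mono hCB).ncard_image]
  by_cases hlamG : lam ≤ ((G : Set F).ncard : ℝ)
  swap
  · have hCG : (τ '' C).ncard ≤ (G : Set F).ncard := (Set.ncard_image_le hC).trans <|
      (Set.ncard_le_ncard Set.inter_subset_right (hG.image _)).trans (Set.ncard_image_le hG)
    have : ((τ '' C).ncard : ℝ) ≤ (G : Set F).ncard := by exact_mod_cast hCG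
    linarith [le_max_left lam (Real.sqrt ((G : Set F).ncard))]
  obtain ⟨n, hnM, hn⟩ := hA.2 G hG hlamG
  have hX : ∀ t₁ ∈ τ '' C, ∀ t₂ ∈ τ '' C, ∀ t₃ ∈ τ '' C, ∀ t ∈ τ '' C, t₁ ≠ t → t₂ ≠ t₃ →
      crossRatio t₁ t₂ t₃ t ∈ G := by
    rintro _ ⟨s₁, hs₁, rfl⟩ _ ⟨s₂, hs₂, rfl⟩ _ ⟨s₃, hs₃, rfl⟩ _ ⟨s, hs, rfl⟩ h₁ h₂₃
    rw [hcr s₁ (hCB hs₁) s₂ (hCB hs₂) s₃ (hCB hs₃) s (hCB hs) (ne_of_apply_ne τ h₁)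
      (ne_of_apply_ne τ h₂₃)]
    exact crossRatio_mem_of_mem_affine_image G hs₁.2 hs₂.2 hs₃.2 hs.2
  by_cases htwo : ∀ c, (τ '' C ∩ (fun g => g + c) '' (G : Set F)).ncard ≤ 2
  · have hmeet := hn.trans' <| Set.encard_mono fun S (hS : _ ∧ (τ '' C ∩ S).Nonempty) =>
      ⟨hS.1, hS.2.mono (Set.inter_subset_inter_left S hTA)⟩
    have : ((τ '' C).ncard : ℝ) ≤ 2 * n := by
      exact_mod_cast ncard_le_mul_of_ncard_inter_translate_le G.zero_mem hT htwo hmeet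
    linarith
  · push Not at htwo
    obtain ⟨c, hc⟩ := htwo
    obtain ⟨t₁, h₁, t₂, h₂, t₃, h₃, h₁₂, h₁₃, h₂₃⟩ :=
      (Set.two_lt_ncard (hT.inter_of_left _)).1 hc
    have hcover := subset_translate_of_three_mem_translate G hX h₁ h₂ h₃ h₁₂ h₁₃ h₂₃
    have hsub : τ '' C ⊆ A ∩ (fun g => 1 * g + t₁) '' (G : Set F) := fun t ht =>
      ⟨hTA ht, by simpa using hcover ht⟩
    exact (Nat.cast_le.2 (Set.ncard_le_ncard hsub ((hG.image _).inter_of_right _))).trans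
      (hA.1 G hG 1 t₁)

theorem stmt_3 {F : Type*} [Field F] (lam : ℝ) (hlam : 0 < lam)
    (A B : Set F) (hB : B.Finite) (hA : IsStrongAntifield lam A)
    (τ : F → F) (hmaps : Set.MapsTo τ B A) (hinj : Set.InjOn τ B)
    (hcr : ∀ b₁ ∈ B, ∀ b₂ ∈ B, ∀ b₃ ∈ B, ∀ b₄ ∈ B, b₁ ≠ b₄ → b₂ ≠ b₃ →
      crossRatio (τ b₁) (τ b₂) (τ b₃) (τ b₄) = crossRatio b₁ b₂ b₃ b₄) :
    IsAntifield lam B :=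
  stmt_3_general lam A B hA τ hmaps hinj hcr
end

section
/- Let F be a field, Z ⊆ F a finite set, and R(Z) = (Z−Z)/(Z−Z) the set of ratios (z₁−z₂)/(z₃−z₄) with z₁,z₂,z₃,z₄ ∈ Z and z₃ ≠ z₄. If x ∈ F but x ∉ R(Z), then |Z + xZ| ≥ |Z|(|Z|−1)/2, where Z + xZ = {z₁ + x z₂ : z₁, z₂ ∈ Z}. -/
/-! If `x ∉ R(Z)`, then `z₁ + x z₂` determines `(z₁, z₂)`: an equality `a + x b = c + x d` with
`b ≠ d` would exhibit `x = (c - a) / (b - d)` as an element of `R(Z)`. Hence `|Z + xZ| = |Z|²`,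
which is far more than `|Z|(|Z| - 1)/2`. -/

/-- The ratio set `R(Z) = (Z − Z)/(Z − Z)`. -/
def ratioSet {F : Type*} [Field F] (Z : Finset F) : Set F :=
  {r | ∃ z₁ ∈ Z, ∃ z₂ ∈ Z, ∃ z₃ ∈ Z, ∃ z₄ ∈ Z, z₃ ≠ z₄ ∧ r = (z₁ - z₂) / (z₃ - z₄)}

theorem injOn_add_mul_of_notMem_ratioSet {F : Type*} [Field F] {Z : Finset F} {x : F}
    (hx : x ∉ ratioSet Z) :
    Set.InjOn (fun p : F × F => p.1 + x * p.2) (Z ×ˢ Z : Finset (F × F)) := by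
  rintro ⟨a, b⟩ hab ⟨c, d⟩ hcd h
  simp only [Finset.coe_product, Set.mem_prod, Finset.mem_coe] at hab hcd h
  obtain rfl | hbd := eq_or_ne b d
  · simpa using h
  · refine absurd ⟨c, hcd.1, a, hab.1, b, hab.2, d, hcd.2, hbd, ?_⟩ hx
    rw [eq_div_iff (sub_ne_zero.mpr hbd)]
    linear_combination h

theorem card_image_add_mul_of_notMem_ratioSet {F : Type*} [Field F] [DecidableEq F]
    {Z : Finset F} {x : F} (hx : x ∉ ratioSet Z) :
    ((Z ×ˢ Z).image (fun p => p.1 + x * p.2)).card = Z.card ^ 2 := by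
  rw [Finset.card_image_of_injOn (injOn_add_mul_of_notMem_ratioSet hx), Finset.card_product, sq]

theorem stmt_5_general {F : Type*} [Field F] [DecidableEq F] (Z : Finset F)
    (x : F) (hx : x ∉ ratioSet Z) :
    (Z.card : ℝ) * (Z.card - 1) / 2 ≤
      (((Z ×ˢ Z).image (fun p => p.1 + x * p.2)).card : ℝ) := by
  rw [card_image_add_mul_of_notMem_ratioSet hx]
  push_cast
  nlinarith [sq_nonneg (Z.card : ℝ), Nat.cast_nonneg (α := ℝ) Z.card]

theorem stmt_5 {F : Type*} [Field F] [DecidableEq F] (Z : Finset F) (hZ : 2 ≤ Z.card)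
    (x : F) (hx : x ∉ ratioSet Z) :
    (Z.card : ℝ) * (Z.card - 1) / 2 ≤
      (((Z ×ˢ Z).image (fun p => p.1 + x * p.2)).card : ℝ) :=
  stmt_5_general Z x hx
end

section
/- Let F be a field and Z ⊆ F a finite set such that R(Z) = (Z−Z)/(Z−Z) is not closed under multiplication. Then there exist elements x₁,x₂,b₁,b₂,b₃,b₄ ∈ Z (with appropriate nonvanishing denominators) such that (x₁−x₂)/x₁ · (b₁−b₂)/(b₃−b₄) ∉ R(Z); consequently, for every Z' ⊆ Z, |Z'|·(|Z'|−1)/2 ≤ |x₁(b₁−b₂)Z' − x₂(b₁−b₂)Z' + x₁(b₃−b₄)Z'|. -/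
section RatioSet

variable {F : Type*} [Field F] {Z Z' : Finset F}

lemma zero_mem_ratioSet {a b : F} (ha : a ∈ Z) (hb : b ∈ Z) (hab : a ≠ b) :
    (0 : F) ∈ ratioSet Z :=
  ⟨a, ha, a, ha, a, ha, b, hb, hab, by simp⟩

lemma neg_mem_ratioSet {t : F} (ht : t ∈ ratioSet Z) : -t ∈ ratioSet Z := by
  obtain ⟨z₁, h₁, z₂, h₂, z₃, h₃, z₄, h₄, hne, rfl⟩ := ht
  exact ⟨z₂, h₂, z₁, h₁, z₃, h₃, z₄, h₄, hne, by ring⟩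

lemma inv_mem_ratioSet {t : F} (ht : t ∈ ratioSet Z) : t⁻¹ ∈ ratioSet Z := by
  obtain ⟨z₁, h₁, z₂, h₂, z₃, h₃, z₄, h₄, hne, rfl⟩ := ht
  rcases eq_or_ne z₁ z₂ with rfl | h
  · simpa using zero_mem_ratioSet h₃ h₄ hne
  · exact ⟨z₃, h₃, z₄, h₄, z₁, h₁, z₂, h₂, h, inv_div _ _⟩

lemma ratioSet_mono (h : Z' ⊆ Z) : ratioSet Z' ⊆ ratioSet Z := by
  rintro _ ⟨z₁, h₁, z₂, h₂, z₃, h₃, z₄, h₄, hne, rfl⟩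
  exact ⟨z₁, h h₁, z₂, h h₂, z₃, h h₃, z₄, h h₄, hne, rfl⟩

def ratioSetMultipliers (Z : Finset F) : Submonoid F where
  carrier := {m | ∀ t ∈ ratioSet Z, m * t ∈ ratioSet Z}
  one_mem' t ht := by rwa [one_mul]
  mul_mem' ha hb t ht := by rw [mul_assoc]; exact ha _ (hb t ht)

lemma mem_ratioSetMultipliers {m : F} :
    m ∈ ratioSetMultipliers Z ↔ ∀ t ∈ ratioSet Z, m * t ∈ ratioSet Z :=
  Iff.rfl

lemma neg_one_mem_ratioSetMultipliers : (-1 : F) ∈ ratioSetMultipliers Z := fun t ht => by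
  simpa using neg_mem_ratioSet ht

lemma zero_mem_ratioSetMultipliers {a b : F} (ha : a ∈ Z) (hb : b ∈ Z) (hab : a ≠ b) :
    (0 : F) ∈ ratioSetMultipliers Z := fun _ _ => by
  simpa using zero_mem_ratioSet ha hb hab

lemma inv_mem_ratioSetMultipliers {m : F} (hm : m ∈ ratioSetMultipliers Z) :
    m⁻¹ ∈ ratioSetMultipliers Z := fun t ht => by
  have h := inv_mem_ratioSet (hm _ (inv_mem_ratioSet ht))
  rwa [mul_inv, inv_inv] at h

section FactorMultipliers

variable (hZ : ∀ x ∈ Z, ∀ y ∈ Z, x ≠ 0 → (x - y) / x ∈ ratioSetMultipliers Z)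
include hZ

lemma div_mem_ratioSetMultipliers {a x : F} (ha : a ∈ Z) (hx : x ∈ Z) (ha0 : a ≠ 0)
    (hx0 : x ≠ 0) : a / x ∈ ratioSetMultipliers Z := by
  rcases eq_or_ne a x with rfl | hax
  · simp [div_self ha0]
  · have hax' : a - x ≠ 0 := sub_ne_zero.mpr hax
    have key : a / x = -1 * ((x - a) / x) * ((a - x) / a)⁻¹ := by
      field_simp
      ring
    rw [key]
    exact mul_mem (mul_mem neg_one_mem_ratioSetMultipliers (hZ x hx a ha hx0))
      (inv_mem_ratioSetMultipliers (hZ a ha x hx ha0))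

lemma sub_div_mem_ratioSetMultipliers {a b x : F} (ha : a ∈ Z) (hb : b ∈ Z) (hx : x ∈ Z)
    (hx0 : x ≠ 0) : (a - b) / x ∈ ratioSetMultipliers Z := by
  rcases eq_or_ne a 0 with rfl | ha0
  · rcases eq_or_ne b 0 with rfl | hb0
    · simpa using zero_mem_ratioSetMultipliers ha hx (Ne.symm hx0)
    · rw [zero_sub, neg_div, neg_eq_neg_one_mul]
      exact mul_mem neg_one_mem_ratioSetMultipliers
        (div_mem_ratioSetMultipliers hZ hb hx hb0 hx0)
  · rw [← div_mul_div_cancel₀ ha0]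
    exact mul_mem (hZ a ha b hb ha0) (div_mem_ratioSetMultipliers hZ ha hx ha0 hx0)

lemma ratioSet_subset_ratioSetMultipliers : ratioSet Z ⊆ ratioSetMultipliers Z := by
  rintro _ ⟨z₁, h₁, z₂, h₂, z₃, h₃, z₄, h₄, hne, rfl⟩
  obtain ⟨x, hx, hx0⟩ : ∃ x ∈ Z, x ≠ 0 := by
    rcases eq_or_ne z₃ 0 with rfl | h0
    · exact ⟨z₄, h₄, hne.symm⟩
    · exact ⟨z₃, h₃, h0⟩
  rw [← div_div_div_cancel_right₀ hx0, div_eq_mul_inv]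
  exact mul_mem (sub_div_mem_ratioSetMultipliers hZ h₁ h₂ hx hx0)
    (inv_mem_ratioSetMultipliers (sub_div_mem_ratioSetMultipliers hZ h₃ h₄ hx hx0))

end FactorMultipliers

lemma exists_sub_div_notMem_ratioSetMultipliers
    (h : ∃ r ∈ ratioSet Z, ∃ s ∈ ratioSet Z, r * s ∉ ratioSet Z) :
    ∃ x ∈ Z, ∃ y ∈ Z, x ≠ 0 ∧ (x - y) / x ∉ ratioSetMultipliers Z := by
  by_contra! hZ
  obtain ⟨r, hr, s, hs, hrs⟩ := h
  exact hrs (ratioSet_subset_ratioSetMultipliers hZ hr s hs)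

lemma injOn_mul_add_of_notMem_ratioSet {q : F} (hq : q ∉ ratioSet Z) :
    Set.InjOn (fun p : F × F => q * p.1 + p.2) (Z ×ˢ Z : Finset (F × F)) := by
  rintro ⟨z, w⟩ hp ⟨z', w'⟩ hp' heq
  simp only [Finset.mem_coe, Finset.mem_product] at hp hp' heq
  rcases eq_or_ne z z' with rfl | hzz
  · simpa using heq
  · have hzz' : z - z' ≠ 0 := sub_ne_zero.mpr hzz
    exact absurd ⟨w', hp'.2, w, hp.2, z, hp.1, z', hp'.1, hzz, by
      field_simp
      linear_combination heq⟩ hq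

lemma sq_card_le_card_image_of_notMem_ratioSet [DecidableEq F] {α β γ : F} (hγ : γ ≠ 0)
    (h : (α - β) / γ ∉ ratioSet Z) :
    Z.card ^ 2 ≤
      ((Z ×ˢ Z ×ˢ Z).image (fun q => α * q.1 - β * q.2.1 + γ * q.2.2)).card := by
  have hinj : Set.InjOn (fun p : F × F => γ * ((α - β) / γ * p.1 + p.2))
      (Z ×ˢ Z : Finset (F × F)) :=
    (mul_right_injective₀ hγ).comp_injOn (injOn_mul_add_of_notMem_ratioSet h)
  calc Z.card ^ 2 = ((Z ×ˢ Z).image fun p => γ * ((α - β) / γ * p.1 + p.2)).card := by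
        rw [Finset.card_image_of_injOn hinj, Finset.card_product, sq]
    _ ≤ _ := by
        refine Finset.card_le_card (Finset.image_subset_iff.mpr ?_)
        rintro ⟨z, w⟩ hzw
        rw [Finset.mem_product] at hzw
        refine Finset.mem_image.mpr ⟨(z, z, w), by simp [hzw.1, hzw.2], ?_⟩
        field_simp

end RatioSet

theorem stmt_6 {F : Type*} [Field F] [DecidableEq F] (Z : Finset F)
    (h : ∃ r ∈ ratioSet Z, ∃ s ∈ ratioSet Z, r * s ∉ ratioSet Z) :
    ∃ x₁ ∈ Z, ∃ x₂ ∈ Z, ∃ b₁ ∈ Z, ∃ b₂ ∈ Z, ∃ b₃ ∈ Z, ∃ b₄ ∈ Z,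
      x₁ ≠ 0 ∧ b₃ ≠ b₄ ∧
      (x₁ - x₂) / x₁ * ((b₁ - b₂) / (b₃ - b₄)) ∉ ratioSet Z ∧
      ∀ Z' ⊆ Z,
        (Z'.card : ℝ) * (Z'.card - 1) / 2 ≤
          (((Z' ×ˢ Z' ×ˢ Z').image
            (fun q => x₁ * (b₁ - b₂) * q.1 - x₂ * (b₁ - b₂) * q.2.1
              + x₁ * (b₃ - b₄) * q.2.2)).card : ℝ) := by
  obtain ⟨x₁, hx₁, x₂, hx₂, hx0, hmul⟩ := exists_sub_div_notMem_ratioSetMultipliers h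
  obtain ⟨_, ⟨b₁, hb₁, b₂, hb₂, b₃, hb₃, b₄, hb₄, hb, rfl⟩, hnot⟩ :
      ∃ t ∈ ratioSet Z, (x₁ - x₂) / x₁ * t ∉ ratioSet Z := by
    simpa [mem_ratioSetMultipliers] using hmul
  refine ⟨x₁, hx₁, x₂, hx₂, b₁, hb₁, b₂, hb₂, b₃, hb₃, b₄, hb₄, hx0, hb, hnot, fun Z' hZ' => ?_⟩
  have hb' : b₃ - b₄ ≠ 0 := sub_ne_zero.mpr hb
  have hcoef : (x₁ * (b₁ - b₂) - x₂ * (b₁ - b₂)) / (x₁ * (b₃ - b₄)) =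
      (x₁ - x₂) / x₁ * ((b₁ - b₂) / (b₃ - b₄)) := by
    field_simp
  have hsq := sq_card_le_card_image_of_notMem_ratioSet (mul_ne_zero hx0 hb')
    (hcoef ▸ fun hq => hnot (ratioSet_mono hZ' hq))
  calc (Z'.card : ℝ) * (Z'.card - 1) / 2 ≤ (Z'.card : ℝ) ^ 2 := by
        nlinarith [Nat.cast_nonneg (α := ℝ) Z'.card]
    _ ≤ _ := by exact_mod_cast hsq
end

section
/- Let F be a field and Z ⊆ F a finite set such that R(Z) = (Z−Z)/(Z−Z) is closed under multiplication but not closed under addition. Then there exist c₁,c₂,c₃,c₄ ∈ Z with c₃ ≠ c₄ such that (c₁−c₂)/(c₃−c₄) + 1 ∉ R(Z); consequently for every Z' ⊆ Z, |Z'|(|Z'|−1)/2 ≤ |(c₁−c₂)Z' + (c₃−c₄)Z' + (c₃−c₄)Z'|. -/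
namespace ratioSet

variable {F : Type*} [Field F] {Z : Finset F}

theorem mono {Z' : Finset F} (h : Z' ⊆ Z) : ratioSet Z' ⊆ ratioSet Z := by
  rintro x ⟨z₁, h₁, z₂, h₂, z₃, h₃, z₄, h₄, h34, rfl⟩
  exact ⟨z₁, h h₁, z₂, h h₂, z₃, h h₃, z₄, h h₄, h34, rfl⟩

theorem inv_mem {s : F} (hs : s ∈ ratioSet Z) (hs0 : s ≠ 0) : s⁻¹ ∈ ratioSet Z := by
  obtain ⟨z₁, h₁, z₂, h₂, z₃, h₃, z₄, h₄, h34, rfl⟩ := hs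
  have h12 : z₁ ≠ z₂ := fun h => hs0 (by simp [h])
  exact ⟨z₃, h₃, z₄, h₄, z₁, h₁, z₂, h₂, h12, inv_div _ _⟩

theorem exists_add_one_not_mem
    (hmul : ∀ r ∈ ratioSet Z, ∀ s ∈ ratioSet Z, r * s ∈ ratioSet Z)
    (hadd : ∃ r ∈ ratioSet Z, ∃ s ∈ ratioSet Z, r + s ∉ ratioSet Z) :
    ∃ x ∈ ratioSet Z, x + 1 ∉ ratioSet Z := by
  obtain ⟨r, hr, s, hs, hrs⟩ := hadd
  have hs0 : s ≠ 0 := by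
    rintro rfl
    exact hrs (by simpa using hr)
  refine ⟨r * s⁻¹, hmul r hr _ (inv_mem hs hs0), fun h => hrs ?_⟩
  convert hmul _ h s hs using 1
  field_simp

theorem injOn_add_mul_of_not_mem {x : F} (hx : x ∉ ratioSet Z) :
    Set.InjOn (fun p : F × F => p.1 + x * p.2) (Z ×ˢ Z : Finset (F × F)) := by
  rintro ⟨u₁, v₁⟩ h₁ ⟨u₂, v₂⟩ h₂ (heq : u₁ + x * v₁ = u₂ + x * v₂)
  simp only [Finset.coe_product, Set.mem_prod, Finset.mem_coe] at h₁ h₂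
  by_cases hv : v₁ = v₂
  · subst hv
    simp_all
  · refine absurd ⟨u₂, h₂.1, u₁, h₁.1, v₁, h₁.2, v₂, h₂.2, hv, ?_⟩ hx
    rw [eq_div_iff (sub_ne_zero.mpr hv)]
    linear_combination heq

theorem card_mul_card_le_card_image_of_div_add_one_not_mem [DecidableEq F] {a b : F}
    (hb : b ≠ 0) (hx : a / b + 1 ∉ ratioSet Z) :
    Z.card * Z.card ≤
      ((Z ×ˢ Z ×ˢ Z).image fun q => a * q.1 + b * q.2.1 + b * q.2.2).card := by
  have hinj : Set.InjOn (fun p : F × F => b * (p.1 + (a / b + 1) * p.2))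
      (Z ×ˢ Z : Finset (F × F)) :=
    (mul_right_injective₀ hb).comp_injOn (injOn_add_mul_of_not_mem hx)
  calc Z.card * Z.card
      = ((Z ×ˢ Z).image fun p : F × F => b * (p.1 + (a / b + 1) * p.2)).card := by
        rw [Finset.card_image_of_injOn hinj, Finset.card_product]
    _ ≤ _ := by
        refine Finset.card_le_card fun t ht => ?_
        simp only [Finset.mem_image, Finset.mem_product, Prod.exists] at ht ⊢
        obtain ⟨u, v, ⟨hu, hv⟩, rfl⟩ := ht
        refine ⟨v, v, u, ⟨hv, hv, hu⟩, ?_⟩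
        field_simp
        ring

end ratioSet

theorem stmt_7 {F : Type*} [Field F] [DecidableEq F] (Z : Finset F)
    (hmul : ∀ r ∈ ratioSet Z, ∀ s ∈ ratioSet Z, r * s ∈ ratioSet Z)
    (hadd : ∃ r ∈ ratioSet Z, ∃ s ∈ ratioSet Z, r + s ∉ ratioSet Z) :
    ∃ c₁ ∈ Z, ∃ c₂ ∈ Z, ∃ c₃ ∈ Z, ∃ c₄ ∈ Z, c₃ ≠ c₄ ∧
      (c₁ - c₂) / (c₃ - c₄) + 1 ∉ ratioSet Z ∧
      ∀ Z' ⊆ Z,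
        (Z'.card : ℝ) * (Z'.card - 1) / 2 ≤
          (((Z' ×ˢ Z' ×ˢ Z').image
            (fun q => (c₁ - c₂) * q.1 + (c₃ - c₄) * q.2.1
              + (c₃ - c₄) * q.2.2)).card : ℝ) := by
  obtain ⟨x, ⟨c₁, h₁, c₂, h₂, c₃, h₃, c₄, h₄, h34, rfl⟩, hx⟩ :=
    ratioSet.exists_add_one_not_mem hmul hadd
  refine ⟨c₁, h₁, c₂, h₂, c₃, h₃, c₄, h₄, h34, hx, fun Z' hZ' => ?_⟩
  have hsq : ((Z'.card * Z'.card : ℕ) : ℝ) ≤ _ := Nat.cast_le.mpr <|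
    ratioSet.card_mul_card_le_card_image_of_div_add_one_not_mem (sub_ne_zero.mpr h34)
      fun h => hx (ratioSet.mono hZ' h)
  push_cast at hsq
  nlinarith [Nat.cast_nonneg (α := ℝ) Z'.card]
end

section
/- Let F be a field and Z ⊆ F a finite set with at least two elements. If R(Z) = (Z−Z)/(Z−Z) is contained in a subfield G of F, then there exist a,b ∈ F with Z ⊆ aG + b. -/
theorem sub_div_sub_mem_ratioSet {F : Type*} [Field F] {Z : Finset F} {x y z : F}
    (hx : x ∈ Z) (hy : y ∈ Z) (hz : z ∈ Z) (hxy : x ≠ y) :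
    (z - y) / (x - y) ∈ ratioSet Z :=
  ⟨z, hz, y, hy, x, hx, y, hy, hxy, rfl⟩

theorem stmt_8 {F : Type*} [Field F] (Z : Finset F) (hZ : 2 ≤ Z.card)
    (G : Subfield F) (hR : ratioSet Z ⊆ (G : Set F)) :
    ∃ a b : F, (Z : Set F) ⊆ (fun g => a * g + b) '' (G : Set F) := by
  obtain ⟨x, hx, y, hy, hxy⟩ := Finset.one_lt_card.mp hZ
  refine ⟨x - y, y, fun z hz =>
    ⟨(z - y) / (x - y), hR (sub_div_sub_mem_ratioSet hx hy hz hxy), ?_⟩⟩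
  simp only [mul_div_cancel₀ _ (sub_ne_zero.mpr hxy), sub_add_cancel]
end

section
/- Let F be a field with a (possibly infinite) structure of additive group; more generally let G be an abelian group, and let B, C ⊆ G be finite nonempty sets. For every ε ∈ (0,1), there exists a set T ⊆ G of translates with |T| ≤ C_ε · |B + C|/|C| (for a constant C_ε depending only on ε) such that |B ∩ ⋃_{t∈T}(C + t)| ≥ (1 − ε)|B|. -/
/-! By Cauchy–Schwarz, `|U|²|C|² ≤ |U + C| E(U, C)`, while
`E(U, C) = E(U, -C) = ∑ₜ |U ∩ (t + C)|² ≤ maxₜ |U ∩ (t + C)| · |U||C|`;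
so some translate of `C` covers at least `|U||C| / |U + C| ≥ |U||C| / |B + C|` points of any
`U ⊆ B`. Greedily removing covered points while more than `ε|B|` remain, every translate covers
more than `ε|B||C| / |B + C|` new points, so at most `|B + C| / (ε|C|)` translates are used. -/

open Finset
open scoped Pointwise Combinatorics.Additive

namespace Finset

variable {G : Type*} [AddCommGroup G] [DecidableEq G]

lemma addEnergy_neg_right (s t : Finset G) : E[s, -t] = E[s, t] := by
  refine card_equiv ((Equiv.refl _).prodCongr
    ((Equiv.prodComm _ _).trans ((Equiv.neg G).prodCongr (Equiv.neg G)))) ?_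
  rintro ⟨⟨a₁, a₂⟩, b₁, b₂⟩
  simp [mem_neg', ← sub_eq_add_neg, sub_eq_sub_iff_add_eq_add, and_comm]

lemma sum_addConvolution (s t : Finset G) : ∑ x ∈ s + t, s.addConvolution t x = #s * #t := by
  simp_rw [← card_add_eq, ← card_product]
  exact (card_eq_sum_card_fiberwise fun ab hab ↦ by
    simp only [coe_product, Set.mem_prod, mem_coe] at hab
    exact add_mem_add hab.1 hab.2).symm

lemma exists_card_mul_card_le_card_inter_vadd_mul {U C : Finset G} (hU : U.Nonempty)
    (hC : C.Nonempty) : ∃ t : G, #U * #C ≤ #(U ∩ (t +ᵥ C)) * #(U + C) := by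
  obtain ⟨t, -, ht⟩ := (U + -C).exists_max_image (U.addConvolution (-C)) (hU.add hC.neg)
  refine ⟨t, Nat.le_of_mul_le_mul_right ?_ (Nat.mul_pos hU.card_pos hC.card_pos)⟩
  calc #U * #C * (#U * #C) = #U ^ 2 * #C ^ 2 := by ring
    _ ≤ #(U + C) * E[U, C] := le_card_add_mul_addEnergy U C
    _ ≤ #(U + C) * (#(U ∩ (t +ᵥ C)) * (#U * #C)) := by
        gcongr
        rw [← addEnergy_neg_right, addEnergy_eq_sum_sq', card_inter_vadd,
          ← card_neg C, ← sum_addConvolution, mul_sum]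
        refine sum_le_sum fun x hx ↦ ?_
        rw [card_add_eq, sq]
        exact Nat.mul_le_mul_right _ (ht x hx)
    _ = #(U ∩ (t +ᵥ C)) * #(U + C) * (#U * #C) := by ring

lemma exists_card_sdiff_add_le {B C : Finset G} (hC : C.Nonempty) {m : ℝ} (hm : 0 ≤ m) :
    ∀ U ⊆ B, ∃ T : Finset G, (#(U \ (T + C)) : ℝ) ≤ m ∧ #T * (m * #C) ≤ #U * #(B + C) := by
  intro U
  induction U using Finset.strongInduction with | H U ih
  intro hUB
  by_cases hUm : (#U : ℝ) ≤ m
  · exact ⟨∅, by simpa using hUm, by simp only [card_empty, Nat.cast_zero, zero_mul]; positivity⟩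
  push Not at hUm
  have hU : U.Nonempty := card_pos.1 (by exact_mod_cast hm.trans_lt hUm)
  obtain ⟨t, ht⟩ := exists_card_mul_card_le_card_inter_vadd_mul hU hC
  have hcovered : (#U : ℝ) * #C ≤ #(U ∩ (t +ᵥ C)) * #(B + C) := by
    exact_mod_cast ht.trans (Nat.mul_le_mul_left _ (card_le_card (add_subset_add_right hUB)))
  have hV : (U ∩ (t +ᵥ C)).Nonempty :=
    card_pos.1 (Nat.pos_of_mul_pos_right ((Nat.mul_pos hU.card_pos hC.card_pos).trans_le ht))
  have hssub : U \ (t +ᵥ C) ⊂ U :=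
    sdiff_lt_left.2 fun h ↦ not_disjoint_iff_nonempty_inter.2 hV h.symm
  obtain ⟨T, hT, hTcard⟩ := ih _ hssub (sdiff_subset.trans hUB)
  refine ⟨insert t T, ?_, ?_⟩
  · rwa [insert_eq, union_add, singleton_add, sdiff_union_distrib, ← sdiff_sdiff_left']
  · have hsplit : (#(U \ (t +ᵥ C)) : ℝ) + #(U ∩ (t +ᵥ C)) = #U := by
      exact_mod_cast card_sdiff_add_card_inter U (t +ᵥ C)
    have hTt : (#(insert t T) : ℝ) ≤ #T + 1 := by exact_mod_cast card_insert_le t T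
    have hC0 : (0 : ℝ) ≤ #C := by positivity
    calc (#(insert t T) : ℝ) * (m * #C) ≤ (#T + 1) * (m * #C) := by gcongr
      _ = #T * (m * #C) + m * #C := by ring
      _ ≤ #(U \ (t +ᵥ C)) * #(B + C) + #(U ∩ (t +ᵥ C)) * #(B + C) :=
        add_le_add hTcard ((mul_le_mul_of_nonneg_right hUm.le hC0).trans hcovered)
      _ = #U * #(B + C) := by rw [← add_mul, hsplit]

end Finset

theorem stmt_11_general {G : Type*} [AddCommGroup G] [DecidableEq G]
    (B C : Finset G) (hB : B.Nonempty) (hC : C.Nonempty)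
    (ε : ℝ) (hε0 : 0 < ε) :
    ∃ T : Finset G,
      (T.card : ℝ) ≤ ((B + C).card : ℝ) / (ε * (C.card : ℝ)) ∧
      (1 - ε) * (B.card : ℝ) ≤
        ((B.filter (fun b => ∃ t ∈ T, ∃ c ∈ C, b = c + t)).card : ℝ) := by
  obtain ⟨T, hT, hTcard⟩ :=
    exists_card_sdiff_add_le hC (by positivity : 0 ≤ ε * #B) B Subset.rfl
  have hBpos : (0 : ℝ) < #B := by exact_mod_cast hB.card_pos
  have hCpos : (0 : ℝ) < #C := by exact_mod_cast hC.card_pos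
  have hfilter : B.filter (fun b => ∃ t ∈ T, ∃ c ∈ C, b = c + t) = B ∩ (T + C) := by
    ext b
    simp only [mem_filter, mem_inter, mem_add]
    exact and_congr_right fun _ ↦
      ⟨fun ⟨t, ht, c, hc, h⟩ ↦ ⟨t, ht, c, hc, by rw [h, add_comm]⟩,
        fun ⟨t, ht, c, hc, h⟩ ↦ ⟨t, ht, c, hc, by rw [← h, add_comm]⟩⟩
  refine ⟨T, ?_, ?_⟩
  · rw [le_div_iff₀ (by positivity)]
    exact le_of_mul_le_mul_right (by linarith) hBpos
  · have hsplit : (#(B \ (T + C)) : ℝ) + #(B ∩ (T + C)) = #B := by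
      exact_mod_cast card_sdiff_add_card_inter B (T + C)
    rw [hfilter]
    linarith

theorem stmt_11 {G : Type*} [AddCommGroup G] [DecidableEq G]
    (B C : Finset G) (hB : B.Nonempty) (hC : C.Nonempty)
    (ε : ℝ) (hε0 : 0 < ε) (hε1 : ε < 1) :
    ∃ T : Finset G,
      (T.card : ℝ) ≤ ((B + C).card : ℝ) / (ε * (C.card : ℝ)) ∧
      (1 - ε) * (B.card : ℝ) ≤
        ((B.filter (fun b => ∃ t ∈ T, ∃ c ∈ C, b = c + t)).card : ℝ) :=
  stmt_11_general B C hB hC ε hε0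
end

section
/- Let F be a field, Z ⊆ F finite, and suppose x₁, x₂, x₃, x₄, y₁, y₂, y₃, y₄ ∈ Z satisfy (x₁−x₂)/(x₃−x₄) + (y₁−y₂)/(y₃−y₄) ∉ R(Z) while R(Z) is closed under multiplication, where R(Z) = (Z−Z)/(Z−Z). Then there exist z₁, z₂, z₃, z₄ ∈ Z with z₃ ≠ z₄ such that (z₁−z₂)/(z₃−z₄) + 1 ∉ R(Z). -/
section ratioSet

variable {F : Type*} [Field F] {Z : Finset F}

theorem sub_div_sub_mem_ratioSet_s17 {a b c d : F} (ha : a ∈ Z) (hb : b ∈ Z) (hc : c ∈ Z)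
    (hd : d ∈ Z) (hcd : c ≠ d) : (a - b) / (c - d) ∈ ratioSet Z :=
  ⟨a, ha, b, hb, c, hc, d, hd, hcd, rfl⟩

theorem inv_mem_ratioSet_s17 {r : F} (hr : r ∈ ratioSet Z) : r⁻¹ ∈ ratioSet Z := by
  obtain ⟨a, ha, b, hb, c, hc, d, hd, hcd, rfl⟩ := hr
  by_cases hab : a = b
  · -- `0⁻¹ = 0 = (c - c)/(c - d)`
    subst hab
    simpa using sub_div_sub_mem_ratioSet_s17 hc hc hc hd hcd
  · rw [inv_div]
    exact sub_div_sub_mem_ratioSet_s17 hc hd ha hb hab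

theorem div_add_one_notMem_ratioSet
    (hmul : ∀ r ∈ ratioSet Z, ∀ s ∈ ratioSet Z, r * s ∈ ratioSet Z) {r s : F}
    (hr : r ∈ ratioSet Z) (hs : s ∈ ratioSet Z) (hrs : r + s ∉ ratioSet Z) :
    r / s + 1 ∉ ratioSet Z := by
  have hs₀ : s ≠ 0 := by
    rintro rfl
    exact hrs (by simpa using hr)
  intro h
  apply hrs
  have hprod : (r / s + 1) * s = r + s := by field_simp
  exact hprod ▸ hmul _ h s hs

end ratioSet

theorem stmt_17_general {F : Type*} [Field F] (Z : Finset F)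
    (x₁ x₂ x₃ x₄ y₁ y₂ y₃ y₄ : F)
    (hx₁ : x₁ ∈ Z) (hx₂ : x₂ ∈ Z) (hx₃ : x₃ ∈ Z) (hx₄ : x₄ ∈ Z)
    (hy₁ : y₁ ∈ Z) (hy₂ : y₂ ∈ Z) (hy₃ : y₃ ∈ Z) (hy₄ : y₄ ∈ Z)
    (hx34 : x₃ ≠ x₄) (hy34 : y₃ ≠ y₄)
    (hsum : (x₁ - x₂) / (x₃ - x₄) + (y₁ - y₂) / (y₃ - y₄) ∉ ratioSet Z)
    (hmul : ∀ r ∈ ratioSet Z, ∀ s ∈ ratioSet Z, r * s ∈ ratioSet Z) :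
    ∃ z₁ ∈ Z, ∃ z₂ ∈ Z, ∃ z₃ ∈ Z, ∃ z₄ ∈ Z, z₃ ≠ z₄ ∧
      (z₁ - z₂) / (z₃ - z₄) + 1 ∉ ratioSet Z := by
  have hr := sub_div_sub_mem_ratioSet_s17 hx₁ hx₂ hx₃ hx₄ hx34
  have hs := sub_div_sub_mem_ratioSet_s17 hy₁ hy₂ hy₃ hy₄ hy34
  obtain ⟨z₁, hz₁, z₂, hz₂, z₃, hz₃, z₄, hz₄, hz34, hz⟩ := hmul _ hr _ (inv_mem_ratioSet_s17 hs)
  refine ⟨z₁, hz₁, z₂, hz₂, z₃, hz₃, z₄, hz₄, hz34, ?_⟩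
  rw [← hz, ← div_eq_mul_inv]
  exact div_add_one_notMem_ratioSet hmul hr hs hsum

theorem stmt_17 {F : Type*} [Field F] (Z : Finset F) (hZ : 2 ≤ Z.card)
    (x₁ x₂ x₃ x₄ y₁ y₂ y₃ y₄ : F)
    (hx₁ : x₁ ∈ Z) (hx₂ : x₂ ∈ Z) (hx₃ : x₃ ∈ Z) (hx₄ : x₄ ∈ Z)
    (hy₁ : y₁ ∈ Z) (hy₂ : y₂ ∈ Z) (hy₃ : y₃ ∈ Z) (hy₄ : y₄ ∈ Z)
    (hx34 : x₃ ≠ x₄) (hy34 : y₃ ≠ y₄) (hy12 : y₁ ≠ y₂)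
    (hsum : (x₁ - x₂) / (x₃ - x₄) + (y₁ - y₂) / (y₃ - y₄) ∉ ratioSet Z)
    (hmul : ∀ r ∈ ratioSet Z, ∀ s ∈ ratioSet Z, r * s ∈ ratioSet Z) :
    ∃ z₁ ∈ Z, ∃ z₂ ∈ Z, ∃ z₃ ∈ Z, ∃ z₄ ∈ Z, z₃ ≠ z₄ ∧
      (z₁ - z₂) / (z₃ - z₄) + 1 ∉ ratioSet Z :=
  stmt_17_general Z x₁ x₂ x₃ x₄ y₁ y₂ y₃ y₄ hx₁ hx₂ hx₃ hx₄ hy₁ hy₂ hy₃ hy₄ hx34 hy34 hsum hmul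
end
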